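/- arXiv:math/0212246 — 3 statements merged into one kernel-verified Lean document; each statement's English description precedes it below -/
import Mathlib

section
/- Consecutive cubic pieces sew continuously: c_i(i+1/2) = c_{i+1}(i+1/2) for all i ≥ 2. -/
/-- `p i` is the `i`-th prime: `p 1 = 2`, `p 2 = 3`, ... -/
noncomputable def p (i : ℕ) : ℝ := (Nat.nth Nat.Prime (i - 1) : ℝ)

/-- Coefficient `a_i = p(i+1) - p(i-1))/2 - 1` for the cubic spline. -/
noncomputable def acub (i : ℕ) : ℝ := (p (i+1) - p (i-1)) / 2 - 1

/-- Coefficient `b_i = p(i+1) - p(i) - 1`. -/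
noncomputable def bcub (i : ℕ) : ℝ := p (i+1) - p i - 1

/-- The cubic piece `c_i`. -/
noncomputable def c (i : ℕ) (x : ℝ) : ℝ :=
  2 * (acub i * (x - i - 1/2)^2 + bcub i * (x - i - 1/2) + (p i + p (i+1)) / 2) * (x - i)
    - 2 * p i * (x - i - 1/2)

theorem c_add_half (i : ℕ) : c i ((i : ℝ) + 1/2) = (p i + p (i+1)) / 2 := by
  simp only [c]
  ring

theorem c_succ_add_half (i : ℕ) : c (i+1) ((i : ℝ) + 1/2) = (p i + p (i+1)) / 2 := by
  simp only [c, acub, bcub, Nat.add_sub_cancel]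
  push_cast
  ring

theorem cubic_sewing_continuous_general (i : ℕ) :
    c i ((i : ℝ) + 1/2) = c (i+1) ((i : ℝ) + 1/2) := by
  rw [c_add_half, c_succ_add_half]

theorem cubic_sewing_continuous (i : ℕ) (hi : 2 ≤ i) :
    c i ((i : ℝ) + 1/2) = c (i+1) ((i : ℝ) + 1/2) :=
  cubic_sewing_continuous_general i
end

section
/- Consecutive cubic pieces sew smoothly: the derivatives satisfy c_i'(i+1/2) = c_{i+1}'(i+1/2) for all i ≥ 2. -/
lemma hasDerivAt_cgen (A B C P I x : ℝ) :
    HasDerivAt (fun x => 2 * (A * (x - I - 1/2)^2 + B * (x - I - 1/2) + C) * (x - I)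
      - 2 * P * (x - I - 1/2))
      (2 * (2 * A * (x - I - 1/2) + B) * (x - I)
        + 2 * (A * (x - I - 1/2)^2 + B * (x - I - 1/2) + C) - 2 * P) x := by
  have h1 : HasDerivAt (fun x : ℝ => x - I - 1/2) 1 x := by
    simpa using ((hasDerivAt_id x).sub_const I).sub_const (1/2)
  have h2 : HasDerivAt (fun x : ℝ => x - I) 1 x := by
    simpa using (hasDerivAt_id x).sub_const I
  have hq : HasDerivAt (fun x : ℝ => A * (x - I - 1/2)^2 + B * (x - I - 1/2) + C)
      (A * (2 * (x - I - 1/2)) + B) x := by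
    have := ((h1.pow 2).const_mul A).add (h1.const_mul B)
    have := this.add_const C
    exact this.congr_deriv (by ring)
  have := (((hq.const_mul 2).mul h2).sub ((h1.const_mul P).const_mul 2))
  refine (this.congr_deriv (by ring)).congr_of_eventuallyEq (Filter.Eventually.of_forall fun y => ?_)
  simp only [Pi.mul_apply, Pi.sub_apply]; ring

lemma deriv_c (i : ℕ) (x : ℝ) :
    deriv (c i) x = 2 * (2 * acub i * (x - i - 1/2) + bcub i) * (x - i)
      + 2 * (acub i * (x - i - 1/2)^2 + bcub i * (x - i - 1/2) + (p i + p (i+1)) / 2)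
      - 2 * p i := by
  exact (hasDerivAt_cgen (acub i) (bcub i) ((p i + p (i+1)) / 2) (p i) i x).deriv

theorem cubic_sewing_smooth (i : ℕ) (hi : 2 ≤ i) :
    deriv (c i) ((i : ℝ) + 1/2) = deriv (c (i+1)) ((i : ℝ) + 1/2) := by
  rw [deriv_c, deriv_c]
  simp only [acub, bcub, Nat.add_sub_cancel]
  push_cast
  ring
end

section
/- If the discriminant d_i = 4p(i)^2 - 4(p(i-1)+p(i+1))p(i) + p(i-1)^2/4 + p(i+1)^2/4 + (7/2)p(i-1)p(i+1) + 3 is negative, then the derivative c_i'(x) is positive for all real x. -/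
/-- Discriminant . -/
noncomputable def d (i : ℕ) : ℝ :=
  4 * (p i)^2 - 4 * (p (i-1) + p (i+1)) * p i + (p (i-1))^2 / 4 + (p (i+1))^2 / 4
    + (7/2) * p (i-1) * p (i+1) + 3

lemma gap (i : ℕ) (hi : 2 ≤ i) : p (i-1) + 3 ≤ p (i+1) := by
  have hinf := Nat.infinite_setOf_prime
  set r := Nat.nth Nat.Prime (i - 2) with hr
  set q := Nat.nth Nat.Prime i with hq
  set m := Nat.nth Nat.Prime (i - 1) with hm
  have h1 : r < m := (Nat.nth_lt_nth hinf).2 (by omega)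
  have h2 : m < q := (Nat.nth_lt_nth hinf).2 (by omega)
  have hpr : Nat.Prime r := Nat.prime_nth_prime _
  have hpm : Nat.Prime m := Nat.prime_nth_prime _
  have hpq : Nat.Prime q := Nat.prime_nth_prime _
  have h3 : r + 3 ≤ q := by
    by_contra h
    have hq2 : q = r + 2 := by omega
    have hm1 : m = r + 1 := by omega
    rcases Nat.even_or_odd r with he | ho
    · have : r = 2 := (Nat.Prime.even_iff hpr).1 he
      have h4 : q = 4 := by omega
      rw [h4] at hpq; norm_num at hpq
    · have : Even m := by rcases ho with ⟨k, hk⟩; exact ⟨k+1, by omega⟩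
      have : m = 2 := (Nat.Prime.even_iff hpm).1 this
      have := hpr.two_le; omega
  show (r : ℝ) + 3 ≤ (Nat.nth Nat.Prime (i + 1 - 1) : ℝ)
  have h5 : i + 1 - 1 = i := by omega
  rw [h5]
  exact_mod_cast h3

theorem cubic_deriv_pos_of_disc_neg (i : ℕ) (hi : 2 ≤ i) (hd : d i < 0) (x : ℝ) :
    0 < deriv (c i) x := by
  have h1 : HasDerivAt (fun y : ℝ => y - (i:ℝ) - 1/2) 1 x := by
    simpa using ((hasDerivAt_id x).sub_const (i:ℝ)).sub_const (1/2)
  have h2 := h1.pow 2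
  have h3 := (((h2.const_mul (acub i)).add (h1.const_mul (bcub i))).add_const
      ((p i + p (i+1)) / 2)).const_mul 2
  have h4 : HasDerivAt (fun y : ℝ => y - (i:ℝ)) 1 x := by
    simpa using (hasDerivAt_id x).sub_const (i:ℝ)
  have h5 := (h3.mul h4).sub (h1.const_mul (2 * p i))
  have h6 : HasDerivAt (c i)
      (6 * acub i * (x - i)^2 + (4 * bcub i - 4 * acub i) * (x - i)
        + (acub i / 2 - bcub i + (p i + p (i+1)) - 2 * p i)) x := by
    refine HasDerivAt.congr_deriv h5 ?_
    push_cast [Pi.add_apply, Pi.pow_apply]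
    ring
  rw [h6.deriv]
  have hgap := gap i hi
  have ha : (1:ℝ)/2 ≤ acub i := by unfold acub; linarith
  set D := 6 * acub i * (x - (i:ℝ))^2 + (4 * bcub i - 4 * acub i) * (x - (i:ℝ))
      + (acub i / 2 - bcub i + (p i + p (i+1)) - 2 * p i) with hDdef
  have key : 24 * acub i * D = (12 * acub i * (x - i) + (4 * bcub i - 4 * acub i))^2 - 4 * d i := by
    rw [hDdef]; unfold acub bcub d; ring
  nlinarith [sq_nonneg (12 * acub i * (x - i) + (4 * bcub i - 4 * acub i)), key, ha, hd]
end
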